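/- Let n divide m, say m = kn with k ≥ 1. Then every extreme point of M(n, kn) has support of cardinality exactly kn, i.e. extremal matrices in M(n, kn) coincide with the matrices of minimum support, and S(n, kn) = kn. -/

import Mathlib

open Finset

def DS (n m : ℕ) (A : Matrix (Fin n) (Fin m) ℝ) : Prop :=
  (∀ i j, 0 ≤ A i j) ∧ (∀ j, ∑ i, A i j = (n : ℝ)) ∧ (∀ i, ∑ j, A i j = (m : ℝ))

noncomputable def supp {n m : ℕ} (A : Matrix (Fin n) (Fin m) ℝ) : Finset (Fin n × Fin m) :=
  Finset.univ.filter fun p => A p.1 p.2 ≠ 0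

noncomputable def S (n m : ℕ) : ℕ :=
  sInf {k | ∃ A : Matrix (Fin n) (Fin m) ℝ, DS n m A ∧ (supp A).card = k}

def IsExtremal {n m : ℕ} (M : Matrix (Fin n) (Fin m) ℝ) : Prop :=
  DS n m M ∧ ∀ (A B : Matrix (Fin n) (Fin m) ℝ) (t : ℝ), DS n m A → DS n m B →
    0 < t → t < 1 → M = t • A + (1 - t) • B → A = M ∧ B = M

/-! Entries of `M ∈ M(n, kn)` are at most the column sum `n`, so each row, summing to `kn`, has at
least `k` nonzero entries, and `|supp M| = kn` exactly when every column has a single nonzero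
entry; such an `M` is determined by its zero pattern, hence is extremal.

Conversely let `M` be extremal and `R` the set of rows with more than `k` nonzero entries. A row
with only `k` nonzero entries has all of them equal to `n`, and these fill their columns; so the
columns `C` that `R` meets are supported in `R`, and comparing masses gives `n |C| ≤ kn |R|`. The
cells of `supp M` in the rows `R` then number at least `(k + 1) |R| ≥ |R| + |C|`, more than the
`|R| + |C| - 1` independent margin conditions on them, so some nonzero matrix with zero margins is
supported there, and moving `M` a little along it in both directions exhibits `M` as a midpoint.
Hence `R = ∅`: every row has exactly `k` nonzero entries. -/

open Filter Topology

noncomputable def rowSupp {ι κ : Type*} [Fintype κ] (A : Matrix ι κ ℝ) (i : ι) : Finset κ :=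
  univ.filter fun j => A i j ≠ 0

noncomputable def colSupp {ι κ : Type*} [Fintype ι] (A : Matrix ι κ ℝ) (j : κ) : Finset ι :=
  univ.filter fun i => A i j ≠ 0

lemma mem_colSupp {ι κ : Type*} [Fintype ι] {A : Matrix ι κ ℝ} {i : ι} {j : κ} :
    i ∈ colSupp A j ↔ A i j ≠ 0 := by
  simp [colSupp]

lemma card_filter_product_univ_ne_zero {ι κ : Type*} [Fintype κ] (A : Matrix ι κ ℝ)
    (R : Finset ι) :
    #((R ×ˢ univ).filter fun p : ι × κ => A p.1 p.2 ≠ 0) = ∑ i ∈ R, #(rowSupp A i) := by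
  simp only [card_filter, sum_product, rowSupp]

lemma Matrix.exists_ne_zero_margins_eq_zero {ι κ : Type*} [Fintype ι] [Fintype κ]
    (E : Finset (ι × κ)) (R : Finset ι) (C : Finset κ) (hE : E ⊆ R ×ˢ C) (hC : C.Nonempty)
    (hcard : #R + #C ≤ #E) :
    ∃ D : Matrix ι κ ℝ, D ≠ 0 ∧ (∀ p ∉ E, D p.1 p.2 = 0) ∧
      (∀ i, ∑ j, D i j = 0) ∧ (∀ j, ∑ i, D i j = 0) := by
  classical
  obtain ⟨j₀, hj₀⟩ := hC
  -- The column sum at `j₀` is not imposed: it follows from the others and the row sums.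
  let Φ : Matrix ι κ ℝ →ₗ[ℝ] (R → ℝ) × (C.erase j₀ → ℝ) × ((Eᶜ : Finset (ι × κ)) → ℝ) :=
    (LinearMap.pi fun i => ∑ j, Matrix.entryLinearMap ℝ ℝ i.1 j).prod <|
      (LinearMap.pi fun j => ∑ i, Matrix.entryLinearMap ℝ ℝ i j.1).prod
        (LinearMap.pi fun p => Matrix.entryLinearMap ℝ ℝ p.1.1 p.1.2)
  have hrank : Module.finrank ℝ ((R → ℝ) × (C.erase j₀ → ℝ) × ((Eᶜ : Finset (ι × κ)) → ℝ)) <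
      Module.finrank ℝ (Matrix ι κ ℝ) := by
    have hE_le : #E ≤ Fintype.card ι * Fintype.card κ := by
      simpa using card_le_univ E
    simp only [Module.finrank_prod, Module.finrank_fintype_fun_eq_card, Fintype.card_coe,
      Module.finrank_matrix, Module.finrank_self, card_erase_of_mem hj₀, card_compl,
      Fintype.card_prod]
    have := card_pos.2 ⟨j₀, hj₀⟩
    omega
  obtain ⟨D, hDker, hD⟩ := Submodule.exists_mem_ne_zero_of_ne_bot
    (LinearMap.ker_ne_bot_of_finrank_lt (f := Φ) hrank)
  simp only [LinearMap.mem_ker, Φ, LinearMap.coe_prod, Function.prod, Prod.mk_eq_zero, funext_iff,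
    Pi.zero_apply, LinearMap.pi_apply, LinearMap.coe_sum, Finset.sum_apply,
    Matrix.entryLinearMap_apply, Subtype.forall, mem_compl] at hDker
  obtain ⟨hrow, hcol, hoff⟩ := hDker
  have hrows : ∀ i, ∑ j, D i j = 0 := by
    intro i
    by_cases hi : i ∈ R
    · exact hrow i hi
    · exact sum_eq_zero fun j _ => hoff (i, j) fun h => hi (mem_product.1 (hE h)).1
  have hcols : ∀ j ≠ j₀, ∑ i, D i j = 0 := by
    intro j hj
    by_cases hjC : j ∈ C
    · exact hcol j (mem_erase.2 ⟨hj, hjC⟩)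
    · exact sum_eq_zero fun i _ => hoff (i, j) fun h => hjC (mem_product.1 (hE h)).2
  refine ⟨D, hD, hoff, hrows, fun j => ?_⟩
  by_cases hj : j = j₀
  · subst hj
    calc ∑ i, D i j = ∑ j', ∑ i, D i j' := (sum_eq_single j (fun j' _ => hcols j') (by simp)).symm
      _ = ∑ i, ∑ j', D i j' := sum_comm
      _ = 0 := sum_eq_zero fun i _ => hrows i
  · exact hcols j hj

lemma card_supp_eq_sum_card_rowSupp {n m : ℕ} (A : Matrix (Fin n) (Fin m) ℝ) :
    #(supp A) = ∑ i, #(rowSupp A i) := by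
  rw [← card_filter_product_univ_ne_zero, univ_product_univ, supp]

lemma card_supp_eq_sum_card_colSupp {n m : ℕ} (A : Matrix (Fin n) (Fin m) ℝ) :
    #(supp A) = ∑ j, #(colSupp A j) := by
  simp only [supp, colSupp, card_filter, Fintype.sum_prod_type_right]

namespace DS

variable {n m : ℕ} {A : Matrix (Fin n) (Fin m) ℝ}

lemma apply_le (hA : DS n m A) (i : Fin n) (j : Fin m) : A i j ≤ n := by
  rw [← hA.2.1 j]
  exact single_le_sum (fun i _ => hA.1 i j) (mem_univ i)

lemma colSupp_nonempty (hn : 0 < n) (hA : DS n m A) (j : Fin m) : (colSupp A j).Nonempty := by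
  by_contra h
  have hzero : ∀ i, A i j = 0 := fun i => by
    by_contra hij
    exact h ⟨i, mem_colSupp.2 hij⟩
  have := hA.2.1 j
  simp only [hzero, sum_const_zero] at this
  exact hn.ne (by exact_mod_cast this)

lemma le_card_supp (hn : 0 < n) (hA : DS n m A) : m ≤ #(supp A) := calc
  m = ∑ _j : Fin m, 1 := by simp
  _ ≤ ∑ j, #(colSupp A j) := sum_le_sum fun j _ => (hA.colSupp_nonempty hn j).card_pos
  _ = #(supp A) := (card_supp_eq_sum_card_colSupp A).symm

lemma card_colSupp_eq_one (hn : 0 < n) (hA : DS n m A) (h : #(supp A) = m) (j : Fin m) :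
    #(colSupp A j) = 1 := by
  have hsum : ∑ _j : Fin m, 1 = ∑ j, #(colSupp A j) := by
    rw [← card_supp_eq_sum_card_colSupp, h]
    simp
  exact ((sum_eq_sum_iff_of_le (f := fun _ => 1) fun j _ =>
    (hA.colSupp_nonempty hn j).card_pos).1 hsum j (mem_univ j)).symm

lemma sum_rowSupp (hA : DS n m A) (i : Fin n) : ∑ j ∈ rowSupp A i, A i j = m := by
  rw [rowSupp, sum_filter_ne_zero, hA.2.2 i]

lemma le_card_rowSupp_mul (hA : DS n m A) (i : Fin n) : m ≤ #(rowSupp A i) * n := by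
  have : (m : ℝ) ≤ #(rowSupp A i) * n := by
    rw [← hA.sum_rowSupp i, ← nsmul_eq_mul]
    exact sum_le_card_nsmul _ _ _ fun j _ => hA.apply_le i j
  exact_mod_cast this

lemma apply_eq_of_card_rowSupp_mul_le (hA : DS n m A) {i : Fin n}
    (hi : #(rowSupp A i) * n ≤ m) {j : Fin m} (hij : A i j ≠ 0) : A i j = n := by
  by_contra hne
  have hlt : m < (#(rowSupp A i) * n : ℝ) := by
    rw [← hA.sum_rowSupp i, ← nsmul_eq_mul, ← sum_const]
    exact sum_lt_sum (fun j _ => hA.apply_le i j)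
      ⟨j, by simpa [rowSupp] using hij, lt_of_le_of_ne (hA.apply_le i j) hne⟩
  exact (by exact_mod_cast hi : (#(rowSupp A i) * n : ℝ) ≤ m).not_gt hlt

lemma apply_eq_zero_of_apply_eq (hA : DS n m A) {i : Fin n} {j : Fin m} (hij : A i j = n)
    {i' : Fin n} (hi' : i' ≠ i) : A i' j = 0 := by
  have hrest : ∑ x ∈ univ.erase i, A x j = 0 := by
    have h := hA.2.1 j
    rw [← add_sum_erase _ _ (mem_univ i), hij] at h
    linarith
  exact (sum_eq_zero_iff_of_nonneg fun x _ => hA.1 x j).1 hrest i' (mem_erase.2 ⟨hi', mem_univ _⟩)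

lemma mul_card_le_of_colSupp_subset (hA : DS n m A) {R : Finset (Fin n)} {C : Finset (Fin m)}
    (hC : ∀ j ∈ C, colSupp A j ⊆ R) : n * #C ≤ m * #R := by
  have : (n * #C : ℝ) ≤ m * #R := calc
    (n * #C : ℝ) = ∑ j ∈ C, ∑ i ∈ R, A i j := by
      rw [mul_comm, ← nsmul_eq_mul, ← sum_const]
      refine sum_congr rfl fun j hj => ?_
      rw [← hA.2.1 j]
      exact (sum_subset (subset_univ R) fun i _ hi =>
        not_not.1 fun hij => hi (hC j hj (mem_colSupp.2 hij))).symm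
    _ ≤ ∑ j, ∑ i ∈ R, A i j := sum_le_univ_sum_of_nonneg fun j => sum_nonneg fun i _ => hA.1 i j
    _ = m * #R := by
      rw [sum_comm, mul_comm, ← nsmul_eq_mul, ← sum_const]
      exact sum_congr rfl fun i _ => hA.2.2 i
  exact_mod_cast this

lemma add_smul_of_margins_eq_zero {D : Matrix (Fin n) (Fin m) ℝ} (hA : DS n m A)
    (hr : ∀ i, ∑ j, D i j = 0) (hc : ∀ j, ∑ i, D i j = 0) {c : ℝ}
    (hnn : ∀ i j, 0 ≤ A i j + c * D i j) :
    DS n m (A + c • D) := by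
  refine ⟨hnn, fun j => ?_, fun i => ?_⟩ <;>
    simp only [Matrix.add_apply, Matrix.smul_apply, smul_eq_mul, sum_add_distrib, ← mul_sum,
      hA.2.1, hA.2.2, hr, hc, mul_zero, add_zero]

lemma eq_of_card_colSupp_le_one {X : Matrix (Fin n) (Fin m) ℝ} (hA : DS n m A)
    (hX : DS n m X) (hcol : ∀ j, #(colSupp A j) ≤ 1) (hzero : ∀ i j, A i j = 0 → X i j = 0) :
    X = A := by
  ext i j
  by_cases hij : A i j = 0
  · rw [hij, hzero i j hij]
  have hA0 : ∀ i', i' ≠ i → A i' j = 0 := fun i' hi' => by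
    by_contra h
    exact hi' (card_le_one.1 (hcol j) i' (mem_colSupp.2 h) i (mem_colSupp.2 hij))
  have hsingle : ∀ {Y : Matrix (Fin n) (Fin m) ℝ}, DS n m Y → (∀ i', i' ≠ i → Y i' j = 0) →
      Y i j = n := fun hY hY0 => by
    rw [← hY.2.1 j, sum_eq_single i (fun i' _ => hY0 i') (by simp)]
  rw [hsingle hX fun i' hi' => hzero i' j (hA0 i' hi'), hsingle hA hA0]

lemma isExtremal_of_card_colSupp_le_one (hA : DS n m A) (hcol : ∀ j, #(colSupp A j) ≤ 1) :
    IsExtremal A := by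
  refine ⟨hA, fun X Y t hX hY ht ht1 hXY => ?_⟩
  have hzero : ∀ i j, A i j = 0 → X i j = 0 ∧ Y i j = 0 := fun i j hij => by
    have h := congrFun (congrFun hXY i) j
    simp only [Matrix.add_apply, Matrix.smul_apply, smul_eq_mul] at h
    have hX' := mul_nonneg ht.le (hX.1 i j)
    have hY' := mul_nonneg (sub_nonneg.2 ht1.le) (hY.1 i j)
    exact ⟨(mul_eq_zero.1 (by linarith : t * X i j = 0)).resolve_left ht.ne',
      (mul_eq_zero.1 (by linarith : (1 - t) * Y i j = 0)).resolve_left (sub_ne_zero.2 ht1.ne')⟩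
  exact ⟨hA.eq_of_card_colSupp_le_one hX hcol fun i j h => (hzero i j h).1,
    hA.eq_of_card_colSupp_le_one hY hcol fun i j h => (hzero i j h).2⟩

lemma isExtremal_of_card_supp_eq (hn : 0 < n) (hA : DS n m A) (h : #(supp A) = m) :
    IsExtremal A :=
  hA.isExtremal_of_card_colSupp_le_one fun j => (hA.card_colSupp_eq_one hn h j).le

end DS

namespace IsExtremal

variable {n m : ℕ} {M : Matrix (Fin n) (Fin m) ℝ}

lemma eq_zero_of_margins_eq_zero (hM : IsExtremal M) {D : Matrix (Fin n) (Fin m) ℝ}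
    (hD : ∀ i j, M i j = 0 → D i j = 0) (hr : ∀ i, ∑ j, D i j = 0)
    (hc : ∀ j, ∑ i, D i j = 0) : D = 0 := by
  have hsmall : ∀ᶠ ε in 𝓝[>] (0 : ℝ), ∀ i j, ε * |D i j| ≤ M i j := by
    refine eventually_all.2 fun i => eventually_all.2 fun j => ?_
    rcases (hM.1.1 i j).eq_or_lt with h | h
    · exact Eventually.of_forall fun ε => by simp [hD i j h.symm, ← h]
    · have hlim : Tendsto (fun ε : ℝ => ε * |D i j|) (𝓝[>] 0) (𝓝 0) :=
        ((continuous_mul_const _).tendsto' 0 0 (zero_mul _)).mono_left nhdsWithin_le_nhds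
      exact (hlim.eventually_lt_const h).mono fun ε => le_of_lt
  obtain ⟨ε, hε, hεpos⟩ := (hsmall.and self_mem_nhdsWithin).exists
  have hnn : ∀ c : ℝ, |c| = ε → ∀ i j, 0 ≤ M i j + c * D i j := fun c hc i j => by
    have := neg_abs_le (c * D i j)
    rw [abs_mul, hc] at this
    linarith [hε i j]
  have hX := hM.1.add_smul_of_margins_eq_zero hr hc (hnn ε (abs_of_pos hεpos))
  have hY := hM.1.add_smul_of_margins_eq_zero hr hc (hnn (-ε) (by rw [abs_neg, abs_of_pos hεpos]))
  have hmid : M = (1 / 2 : ℝ) • (M + ε • D) + (1 - 1 / 2 : ℝ) • (M + (-ε) • D) := by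
    ext i j
    simp only [Matrix.add_apply, Matrix.smul_apply, smul_eq_mul]
    ring
  have hεD : ε • D = 0 := by
    simpa using (hM.2 _ _ _ hX hY (by norm_num) (by norm_num) hmid).1
  exact (smul_eq_zero.1 hεD).resolve_left hεpos.ne'

lemma card_lt (hM : IsExtremal M) {E : Finset (Fin n × Fin m)} {R : Finset (Fin n)}
    {C : Finset (Fin m)} (hE : E ⊆ supp M) (hRC : E ⊆ R ×ˢ C) (hC : C.Nonempty) :
    #E < #R + #C := by
  by_contra! h
  obtain ⟨D, hD0, hDE, hr, hc⟩ := Matrix.exists_ne_zero_margins_eq_zero E R C hRC hC h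
  refine hD0 (hM.eq_zero_of_margins_eq_zero (fun i j hij => hDE (i, j) fun hp => ?_) hr hc)
  simpa [supp, hij] using hE hp

end IsExtremal

section Uniform

variable {n k : ℕ} {M : Matrix (Fin n) (Fin (k * n)) ℝ}

lemma DS.le_card_rowSupp (hn : 0 < n) (hM : DS n (k * n) M) (i : Fin n) :
    k ≤ #(rowSupp M i) :=
  Nat.le_of_mul_le_mul_right (hM.le_card_rowSupp_mul i) hn

lemma DS.colSupp_subset_of_card_rowSupp_le (hM : DS n (k * n) M) {i : Fin n} {j : Fin (k * n)}
    (hi : #(rowSupp M i) ≤ k) (hij : M i j ≠ 0) : colSupp M j ⊆ {i} := by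
  intro i' hi'
  rw [mem_singleton]
  by_contra h
  exact mem_colSupp.1 hi' (hM.apply_eq_zero_of_apply_eq
    (hM.apply_eq_of_card_rowSupp_mul_le (Nat.mul_le_mul_right n hi) hij) h)

lemma IsExtremal.card_rowSupp_le (hn : 0 < n) (hM : IsExtremal M) (i₀ : Fin n) :
    #(rowSupp M i₀) ≤ k := by
  by_contra! hi₀
  set R := univ.filter fun i => k < #(rowSupp M i)
  set E := (R ×ˢ univ).filter fun p : Fin n × Fin (k * n) => M p.1 p.2 ≠ 0
  have hE : (k + 1) * #R ≤ #E := by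
    rw [card_filter_product_univ_ne_zero, mul_comm, ← smul_eq_mul, ← sum_const]
    exact sum_le_sum fun i hi => (mem_filter.1 hi).2
  have hC : n * #(E.image Prod.snd) ≤ k * n * #R := by
    refine hM.1.mul_card_le_of_colSupp_subset fun j hj => ?_
    obtain ⟨⟨i, j⟩, hp, rfl⟩ := mem_image.1 hj
    simp only [E, mem_filter, mem_product] at hp
    intro i' hi'
    by_contra hi'R
    have hii' := hM.1.colSupp_subset_of_card_rowSupp_le (by simpa [R] using hi'R)
      (mem_colSupp.1 hi') (mem_colSupp.2 hp.2)
    exact hi'R (mem_singleton.1 hii' ▸ hp.1.1)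
  have hR : 0 < #R := card_pos.2 ⟨i₀, by simpa [R] using hi₀⟩
  have hEne : E.Nonempty := card_pos.1 (by nlinarith)
  have hlt := hM.card_lt (filter_subset_filter _ (subset_univ _))
    (fun p hp => mem_product.2 ⟨(mem_product.1 (mem_filter.1 hp).1).1, mem_image_of_mem _ hp⟩)
    (hEne.image Prod.snd)
  have hC' : #(E.image Prod.snd) ≤ k * #R := Nat.le_of_mul_le_mul_left (by linarith) hn
  nlinarith

lemma IsExtremal.card_supp_eq (hn : 0 < n) (hM : IsExtremal M) : #(supp M) = k * n := by
  rw [card_supp_eq_sum_card_rowSupp, sum_congr rfl fun i _ =>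
    le_antisymm (hM.card_rowSupp_le hn i) (hM.1.le_card_rowSupp hn i)]
  simp [mul_comm]

end Uniform

/-- `[n • 1 | ⋯ | n • 1]` with `k` blocks; column `j` is in block `(finProdFinEquiv.symm j).1`. -/
noncomputable def scalarBlockRow (n k : ℕ) : Matrix (Fin n) (Fin (k * n)) ℝ :=
  Matrix.of fun i j => if (finProdFinEquiv.symm j).2 = i then (n : ℝ) else 0

lemma ds_scalarBlockRow (n k : ℕ) : DS n (k * n) (scalarBlockRow n k) := by
  refine ⟨fun i j => ?_, fun j => ?_, fun i => ?_⟩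
  · simp only [scalarBlockRow, Matrix.of_apply]
    split_ifs <;> positivity
  · simp [scalarBlockRow]
  · rw [← finProdFinEquiv.sum_comp]
    simp only [scalarBlockRow, Matrix.of_apply, Equiv.symm_apply_apply]
    simp [Fintype.sum_prod_type]

lemma card_supp_scalarBlockRow {n : ℕ} (hn : 0 < n) (k : ℕ) :
    #(supp (scalarBlockRow n k)) = k * n := by
  have hcol : ∀ j, colSupp (scalarBlockRow n k) j = {(finProdFinEquiv.symm j).2} := fun j => by
    ext i
    simp [mem_colSupp, scalarBlockRow, eq_comm, hn.ne']
  simp [card_supp_eq_sum_card_colSupp, hcol]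

lemma S_eq_of_card_supp_eq {n m : ℕ} (hn : 0 < n) {A : Matrix (Fin n) (Fin m) ℝ}
    (hA : DS n m A) (h : #(supp A) = m) : S n m = m :=
  le_antisymm (Nat.sInf_le ⟨A, hA, h⟩)
    (le_csInf ⟨m, A, hA, h⟩ fun _ ⟨_, hX, hXc⟩ => hXc ▸ hX.le_card_supp hn)

theorem stmt19_general (n k : ℕ) (hn : 0 < n) :
    (∀ M : Matrix (Fin n) (Fin (k * n)) ℝ, DS n (k * n) M →
      (IsExtremal M ↔ (supp M).card = k * n)) ∧ S n (k * n) = k * n :=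
  ⟨fun _ hM => ⟨fun hext => hext.card_supp_eq hn, hM.isExtremal_of_card_supp_eq hn⟩,
    S_eq_of_card_supp_eq hn (ds_scalarBlockRow n k) (card_supp_scalarBlockRow hn k)⟩

theorem stmt19 (n k : ℕ) (hn : 0 < n) (hk : 1 ≤ k) :
    (∀ M : Matrix (Fin n) (Fin (k * n)) ℝ, DS n (k * n) M →
      (IsExtremal M ↔ (supp M).card = k * n)) ∧ S n (k * n) = k * n :=
  stmt19_general n k hn
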